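/- arXiv:2511.10363 — 4 statements merged into one kernel-verified Lean document; each statement's English description precedes it below -/
import Mathlib

section
/- Let a_i = (A_i, b_i, C_i, η_i, J_i) and a_j = (A_j, b_j, C_j, η_j, J_j) be filtering elements over ℝⁿ such that C_i, J_i, C_j, J_j are symmetric positive semidefinite. Then I + C_i·J_j is invertible, so a_i ⊗ a_j is well defined, and the C-component and J-component of a_i ⊗ a_j are again symmetric positive semidefinite. -/
open Matrix

/-- A filtering element over `ℝⁿ`: a 5-tuple `(A, b, C, η, J)` with `A, C, J` real `n × n`
matrices and `b, η ∈ ℝⁿ`. -/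
structure FilteringElem (n : ℕ) where
  A : Matrix (Fin n) (Fin n) ℝ
  b : Fin n → ℝ
  C : Matrix (Fin n) (Fin n) ℝ
  η : Fin n → ℝ
  J : Matrix (Fin n) (Fin n) ℝ

/-- The filtering operator `⊗` on filtering elements (well defined when `I + C_i J_j`
is invertible). -/
noncomputable def filterOp {n : ℕ} (x y : FilteringElem n) : FilteringElem n where
  A := y.A * (1 + x.C * y.J)⁻¹ * x.A
  b := (y.A * (1 + x.C * y.J)⁻¹) *ᵥ (x.b + x.C *ᵥ y.η) + y.b
  C := y.A * (1 + x.C * y.J)⁻¹ * x.C * y.Aᵀ + y.C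
  η := (x.Aᵀ * (1 + y.J * x.C)⁻¹) *ᵥ (y.η - y.J *ᵥ x.b) + x.η
  J := x.Aᵀ * (1 + y.J * x.C)⁻¹ * y.J * x.A + x.J

/-!
Write `C = Bᴴ B`. By the Weinstein–Aronszajn identity `I + C J = I + Bᴴ (B J)` is invertible
exactly when `I + B J Bᴴ` is, and the latter is positive definite. The push-through identity
then gives `(I + C J)⁻¹ C = Bᴴ (I + B J Bᴴ)⁻¹ B`, a congruence of a positive definite matrix,
so the new `C`-component is a congruence of a positive semidefinite matrix plus `C_j`; the
`J`-component is the same with the roles of `C` and `J` exchanged.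
-/

namespace Matrix

section PushThrough

variable {m n α : Type*} [Fintype m] [Fintype n] [DecidableEq m] [DecidableEq n] [CommRing α]

theorem isUnit_one_add_mul_comm (P : Matrix m n α) (Q : Matrix n m α) :
    IsUnit (1 + P * Q) ↔ IsUnit (1 + Q * P) := by
  rw [isUnit_iff_isUnit_det, isUnit_iff_isUnit_det, det_one_add_mul_comm]

theorem inv_one_add_mul_mul (P : Matrix m n α) (Q : Matrix n m α) (h : IsUnit (1 + Q * P)) :
    (1 + P * Q)⁻¹ * P = P * (1 + Q * P)⁻¹ := by
  have hdet := (isUnit_iff_isUnit_det _).mp h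
  have hdet' := (isUnit_iff_isUnit_det _).mp ((isUnit_one_add_mul_comm P Q).mpr h)
  have intertwine : (1 + P * Q) * P = P * (1 + Q * P) := by
    rw [Matrix.add_mul, Matrix.mul_add, Matrix.one_mul, Matrix.mul_one, Matrix.mul_assoc]
  calc (1 + P * Q)⁻¹ * P = (1 + P * Q)⁻¹ * (P * (1 + Q * P)) * (1 + Q * P)⁻¹ := by
        rw [← Matrix.mul_assoc, mul_nonsing_inv_cancel_right _ _ hdet]
    _ = P * (1 + Q * P)⁻¹ := by
        rw [← intertwine, nonsing_inv_mul_cancel_left _ _ hdet']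

end PushThrough

namespace PosSemidef

section TrivialStar

variable {m n R : Type*} [Finite m] [Fintype n]
  [Ring R] [PartialOrder R] [StarRing R] [TrivialStar R]

theorem mul_mul_transpose_same {A : Matrix n n R} (hA : A.PosSemidef) (B : Matrix m n R) :
    (B * A * Bᵀ).PosSemidef := by
  simpa only [conjTranspose_eq_transpose_of_trivial] using hA.mul_mul_conjTranspose_same B

theorem transpose_mul_mul_same {A : Matrix n n R} (hA : A.PosSemidef) (B : Matrix n m R) :
    (Bᵀ * A * B).PosSemidef := by
  simpa only [conjTranspose_eq_transpose_of_trivial] using hA.conjTranspose_mul_mul_same B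

end TrivialStar

section RCLike

open scoped ComplexOrder MatrixOrder

variable {n 𝕜 : Type*} [Fintype n] [DecidableEq n] [RCLike 𝕜] {C J : Matrix n n 𝕜}

theorem exists_eq_conjTranspose_mul_self (hC : C.PosSemidef) : ∃ B : Matrix n n 𝕜, C = Bᴴ * B :=
  CStarAlgebra.nonneg_iff_eq_star_mul_self.mp hC.nonneg

theorem posDef_one_add_mul_mul_conjTranspose (hJ : J.PosSemidef) (B : Matrix n n 𝕜) :
    (1 + B * J * Bᴴ).PosDef :=
  PosDef.one.add_posSemidef (hJ.mul_mul_conjTranspose_same B)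

theorem isUnit_one_add_mul (hC : C.PosSemidef) (hJ : J.PosSemidef) : IsUnit (1 + C * J) := by
  obtain ⟨B, rfl⟩ := hC.exists_eq_conjTranspose_mul_self
  rw [Matrix.mul_assoc, isUnit_one_add_mul_comm]
  exact (hJ.posDef_one_add_mul_mul_conjTranspose B).isUnit

theorem inv_one_add_mul_mul_self (hC : C.PosSemidef) (hJ : J.PosSemidef) :
    ((1 + C * J)⁻¹ * C).PosSemidef := by
  obtain ⟨B, rfl⟩ := hC.exists_eq_conjTranspose_mul_self
  have hpos := hJ.posDef_one_add_mul_mul_conjTranspose B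
  rw [Matrix.mul_assoc Bᴴ B J, ← Matrix.mul_assoc, inv_one_add_mul_mul _ _ hpos.isUnit]
  exact hpos.inv.posSemidef.conjTranspose_mul_mul_same B

end RCLike

end PosSemidef

end Matrix

/-- If the `C`- and `J`-components of two filtering elements are symmetric positive
semidefinite, then `I + C_i J_j` is invertible (so `a_i ⊗ a_j` is well defined), and the
`C`- and `J`-components of `a_i ⊗ a_j` are again symmetric positive semidefinite. -/
theorem filterOp_wellDefined_and_psd (n : ℕ) (x y : FilteringElem n)
    (hCx : x.C.PosSemidef) (hJx : x.J.PosSemidef)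
    (hCy : y.C.PosSemidef) (hJy : y.J.PosSemidef) :
    IsUnit (1 + x.C * y.J) ∧
    (filterOp x y).C.PosSemidef ∧ (filterOp x y).J.PosSemidef := by
  refine ⟨hCx.isUnit_one_add_mul hJy, ?_, ?_⟩
  · have := (hCx.inv_one_add_mul_mul_self hJy).mul_mul_transpose_same y.A
    simpa only [filterOp, Matrix.mul_assoc] using this.add hCy
  · have := (hJy.inv_one_add_mul_mul_self hCx).transpose_mul_mul_same x.A
    simpa only [filterOp, Matrix.mul_assoc] using this.add hJx
end

section
/- Correctness of the Hillis–Steele parallel scan: let (M, ⊗) be a semigroup, n ∈ ℕ, T = 2ⁿ, and a : {0, …, T−1} → M. For each d define step_d : (({0,…,T−1}) → M) → (({0,…,T−1}) → M) by (step_d v)(j) = v(j) if j < 2^d, and (step_d v)(j) = v(j − 2^d) ⊗ v(j) otherwise. Let v_0 = a and v_{d+1} = step_d(v_d). Then for every j with 0 ≤ j ≤ T−1, v_n(j) = a(0) ⊗ a(1) ⊗ ⋯ ⊗ a(j). -/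
/-- `seqProd a s j = a s * a (s+1) * ⋯ * a (s+j)` in a semigroup. -/
def seqProd {M : Type*} [Semigroup M] (a : ℕ → M) (s : ℕ) : ℕ → M
  | 0 => a s
  | j + 1 => seqProd a s j * a (s + j + 1)

/-- One round of the Hillis–Steele scan: position `j` is left unchanged if `j < 2^d`,
and otherwise is replaced by `v (j - 2^d) * v j`. -/
def hsStep {M : Type*} [Semigroup M] (d : ℕ) (v : ℕ → M) : ℕ → M :=
  fun j => if j < 2 ^ d then v j else v (j - 2 ^ d) * v j

/-- `hsIter a d` is the array after `d` rounds of the Hillis–Steele scan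
(`v_0 = a`, `v_{d+1} = step_d v_d`). -/
def hsIter {M : Type*} [Semigroup M] (a : ℕ → M) : ℕ → ℕ → M
  | 0 => a
  | d + 1 => hsStep d (hsIter a d)

/-! After `d` rounds, position `j` holds the product of the `2^d` entries of `a` ending at `j`
(or of all entries up to `j` if there are fewer). A round doubles the window: the window
ending at `j - 2^d` followed by the one ending at `j` is the window of width `2^(d+1)`
ending at `j`, by associativity. After `n` rounds every `j < 2^n` sees the whole prefix. -/

section Semigroup

variable {M : Type*} [Semigroup M] (a : ℕ → M)

theorem seqProd_mul_seqProd (s k : ℕ) :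
    ∀ m, seqProd a s k * seqProd a (s + k + 1) m = seqProd a s (k + m + 1)
  | 0 => rfl
  | m + 1 => by
    rw [seqProd, ← mul_assoc, seqProd_mul_seqProd s k m, Nat.add_succ k m, seqProd]
    congr 2
    omega

/-- The product of the `w` entries `a (j - w + 1), …, a j`; truncated subtraction clips the
window at `0`, so for `j < w` this is the prefix product up to `j`. -/
def windowProd (w j : ℕ) : M :=
  seqProd a (j - (w - 1)) (min j (w - 1))

theorem windowProd_one (j : ℕ) : windowProd a 1 j = a j := by
  simp [windowProd, seqProd]

theorem windowProd_of_lt {w j : ℕ} (h : j < w) : windowProd a w j = seqProd a 0 j := by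
  rw [windowProd, Nat.sub_eq_zero_of_le (by omega), min_eq_left (by omega)]

theorem windowProd_mul_windowProd {w j : ℕ} (hw : 0 < w) (hj : w ≤ j) :
    windowProd a w (j - w) * windowProd a w j = windowProd a (2 * w) j := by
  have key := seqProd_mul_seqProd a (j - w - (w - 1)) (min (j - w) (w - 1)) (w - 1)
  unfold windowProd
  rwa [min_eq_right (by omega : w - 1 ≤ j),
    show j - (w - 1) = j - w - (w - 1) + min (j - w) (w - 1) + 1 by omega,
    show j - (2 * w - 1) = j - w - (w - 1) by omega,
    show min j (2 * w - 1) = min (j - w) (w - 1) + (w - 1) + 1 by omega]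

theorem hsStep_windowProd (d : ℕ) :
    hsStep d (windowProd a (2 ^ d)) = windowProd a (2 ^ (d + 1)) := by
  funext j
  have hw : 0 < 2 ^ d := Nat.two_pow_pos d
  rw [hsStep, pow_succ']
  split_ifs with hj
  · rw [windowProd_of_lt a hj, windowProd_of_lt a (by omega)]
  · exact windowProd_mul_windowProd a hw (by omega)

theorem hsIter_eq_windowProd : ∀ d, hsIter a d = windowProd a (2 ^ d)
  | 0 => funext fun j => (windowProd_one a j).symm
  | d + 1 => by rw [hsIter, hsIter_eq_windowProd d, hsStep_windowProd]

end Semigroup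

/-- Correctness of the Hillis–Steele parallel scan: on an input of length `T = 2^n`
(0-indexed positions `0, …, T-1`), after `n` rounds every position `j` holds the
inclusive prefix product `a 0 * a 1 * ⋯ * a j`. -/
theorem hillisSteele_correct {M : Type*} [Semigroup M] (n : ℕ) (a : ℕ → M) :
    ∀ j, j < 2 ^ n → hsIter a n j = seqProd a 0 j := fun j hj => by
  rw [hsIter_eq_windowProd, windowProd_of_lt a hj]
end

section
/- Correctness of the up-sweep: let (M, ⊗) be a semigroup, n ∈ ℕ, T = 2ⁿ, and a : {1, …, T} → M (1-indexed). Define u_0 = a and, for d = 0, …, n−1, u_{d+1}(k) = u_d(k − 2^d) ⊗ u_d(k) if k is a multiple of 2^{d+1}, and u_{d+1}(k) = u_d(k) otherwise. Then for every D with 0 ≤ D ≤ n and every m with 1 ≤ m ≤ 2^{n−D}, u_D(m·2^D) = a((m−1)·2^D + 1) ⊗ a((m−1)·2^D + 2) ⊗ ⋯ ⊗ a(m·2^D). -/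
/-- One level of the up-sweep: position `k` becomes `u (k - 2^d) * u k` if `k` is a
multiple of `2^(d+1)`, and is left unchanged otherwise. -/
def upStep {M : Type*} [Semigroup M] (d : ℕ) (u : ℕ → M) : ℕ → M :=
  fun k => if 2 ^ (d + 1) ∣ k then u (k - 2 ^ d) * u k else u k

/-- `upIter a d` is the (1-indexed) array after `d` levels of the up-sweep
(`u_0 = a`, `u_{d+1} = upStep d u_d`). -/
def upIter {M : Type*} [Semigroup M] (a : ℕ → M) : ℕ → ℕ → M
  | 0 => a
  | d + 1 => upStep d (upIter a d)

/-! Induction on the level `D`: a block of `2^(D+1)` inputs is the product of its two halves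
of length `2^D`, and by induction these are exactly the two entries that level `D + 1`
combines at the right end of the block. -/

section UpSweep

variable {M : Type*} [Semigroup M] (a : ℕ → M)

theorem seqProd_append (s i : ℕ) :
    ∀ j, seqProd a s i * seqProd a (s + i + 1) j = seqProd a s (i + j + 1)
  | 0 => rfl
  | j + 1 => by
    rw [seqProd, ← mul_assoc, seqProd_append s i j, seqProd]
    congr 2
    omega

theorem seqProd_two_pow_succ (s D : ℕ) :
    seqProd a s (2 ^ (D + 1) - 1) =
      seqProd a s (2 ^ D - 1) * seqProd a (s + 2 ^ D) (2 ^ D - 1) := by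
  have hD : 0 < 2 ^ D := Nat.two_pow_pos D
  have hstart : s + (2 ^ D - 1) + 1 = s + 2 ^ D := by omega
  have hlength : 2 ^ D - 1 + (2 ^ D - 1) + 1 = 2 ^ (D + 1) - 1 := by rw [pow_succ]; omega
  rw [← hstart, seqProd_append, hlength]

theorem upIter_succ_mul_two_pow (D k : ℕ) :
    upIter a (D + 1) ((k + 1) * 2 ^ (D + 1)) =
      upIter a D ((2 * k + 1) * 2 ^ D) * upIter a D ((2 * k + 2) * 2 ^ D) := by
  have hblock : (k + 1) * 2 ^ (D + 1) = (2 * k + 2) * 2 ^ D := by ring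
  have hleft : (2 * k + 2) * 2 ^ D - 2 ^ D = (2 * k + 1) * 2 ^ D := by
    rw [← Nat.sub_one_mul]; rfl
  rw [upIter, upStep, if_pos (dvd_mul_left _ _), hblock, hleft]

theorem upIter_mul_two_pow (D k : ℕ) :
    upIter a D ((k + 1) * 2 ^ D) = seqProd a (k * 2 ^ D + 1) (2 ^ D - 1) := by
  induction D generalizing k with
  | zero => simp [upIter, seqProd]
  | succ D ih =>
    rw [upIter_succ_mul_two_pow, ih, ih (2 * k + 1), seqProd_two_pow_succ]
    congr 2 <;> ring

end UpSweep

/-- Correctness of the up-sweep on a 1-indexed array of length `T = 2^n`: after `D`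
levels, every position `m·2^D` (for `1 ≤ m ≤ 2^(n-D)`) holds the product of its block
`a ((m-1)·2^D + 1) * ⋯ * a (m·2^D)` of `2^D` consecutive input elements. -/
theorem upsweep_correct {M : Type*} [Semigroup M] (n : ℕ) (a : ℕ → M) :
    ∀ D, D ≤ n → ∀ m, 1 ≤ m → m ≤ 2 ^ (n - D) →
      upIter a D (m * 2 ^ D) = seqProd a ((m - 1) * 2 ^ D + 1) (2 ^ D - 1) := by
  intro D _ m hm _
  obtain ⟨k, rfl⟩ := Nat.exists_eq_add_of_le' hm
  exact upIter_mul_two_pow a D k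
end

section
/- Correctness of Sengupta's hybrid parallel scan: let (M, ⊗) be a semigroup, n, m ∈ ℕ with m ≤ n, T = 2ⁿ, N = 2^m, d* = n − m, and a : {1, …, T} → M. Define the reduced arrays by a^{(0)} = a and, for d = 1, …, d*, a^{(d)}_i = a^{(d−1)}_{2i−1} ⊗ a^{(d−1)}_{2i} for 1 ≤ i ≤ 2^{n−d}. Replace a^{(d*)} by its inclusive all-prefix-sums, i.e., set a^{(d*)}_i := a^{(d*)}_1 ⊗ ⋯ ⊗ a^{(d*)}_i. Then perform the down-sweep: for d = d*−1 down to 0 and for 1 ≤ i ≤ 2^{n−d}, set a^{(d)}_i := a^{(d+1)}_{(i−1)/2} ⊗ a^{(d)}_i if i > 1 is odd, a^{(d)}_i := a^{(d+1)}_{i/2} if i is even, and leave a^{(d)}_1 unchanged. Then the final array satisfies a^{(0)}_k = a_1 ⊗ a_2 ⊗ ⋯ ⊗ a_k for every k with 1 ≤ k ≤ T. -/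
/-- The reduced arrays of Sengupta's hybrid scan: `sgReduce a 0 = a` and
`sgReduce a (d+1) i = sgReduce a d (2i-1) * sgReduce a d (2i)` (1-indexed). -/
def sgReduce {M : Type*} [Semigroup M] (a : ℕ → M) : ℕ → ℕ → M
  | 0 => a
  | d + 1 => fun i => sgReduce a d (2 * i - 1) * sgReduce a d (2 * i)

/-- The down-sweep of Sengupta's hybrid scan.  `sgDown a dstar top j` is the array at
level `d = dstar - j`; `sgDown a dstar top 0 = top` is the scanned reduced array at
level `dstar`, and each lower level is obtained by: position `1` is unchanged (keeps
the reduced-array value), an odd position `i > 1` becomes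
`(level (d+1) value at (i-1)/2) * (reduced value at i)`, and an even position `i`
becomes the level `d+1` value at `i/2`. -/
def sgDown {M : Type*} [Semigroup M] (a : ℕ → M) (dstar : ℕ) (top : ℕ → M) :
    ℕ → ℕ → M
  | 0 => top
  | j + 1 => fun i =>
      if i = 1 then sgReduce a (dstar - (j + 1)) 1
      else if i % 2 = 1 then sgDown a dstar top j ((i - 1) / 2) * sgReduce a (dstar - (j + 1)) i
      else sgDown a dstar top j (i / 2)

lemma sgPair {M : Type*} [Semigroup M] (a : ℕ → M) (d : ℕ) :
    ∀ t, seqProd (sgReduce a (d + 1)) 1 t = seqProd (sgReduce a d) 1 (2 * t + 1) := by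
  intro t
  induction t with
  | zero => simp [seqProd, sgReduce]
  | succ t ih =>
      have h1 : 2 * (t + 1) + 1 = (2 * t + 1) + 1 + 1 := by ring
      rw [h1]
      show seqProd (sgReduce a (d + 1)) 1 t * sgReduce a (d + 1) (1 + t + 1) =
        (seqProd (sgReduce a d) 1 (2 * t + 1) * sgReduce a d (1 + (2 * t + 1) + 1)) *
          sgReduce a d (1 + ((2 * t + 1) + 1) + 1)
      rw [ih, mul_assoc]
      have h2 : sgReduce a (d + 1) (1 + t + 1) =
          sgReduce a d (1 + (2 * t + 1) + 1) * sgReduce a d (1 + ((2 * t + 1) + 1) + 1) := by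
        show sgReduce a d (2 * (1 + t + 1) - 1) * sgReduce a d (2 * (1 + t + 1)) = _
        rw [show 2 * (1 + t + 1) - 1 = 1 + (2 * t + 1) + 1 from by omega,
          show 2 * (1 + t + 1) = 1 + ((2 * t + 1) + 1) + 1 from by omega]
      rw [h2]

lemma sgDown_eq {M : Type*} [Semigroup M] (a : ℕ → M) (dstar : ℕ) :
    ∀ j, j ≤ dstar → ∀ k, 1 ≤ k →
      sgDown a dstar (fun i => seqProd (sgReduce a dstar) 1 (i - 1)) j k =
        seqProd (sgReduce a (dstar - j)) 1 (k - 1) := by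
  intro j
  induction j with
  | zero => intro _ k _; rfl
  | succ j ih =>
      intro hj k hk
      have hlev : dstar - j = (dstar - (j + 1)) + 1 := by omega
      rcases eq_or_ne k 1 with rfl | hk1
      · show sgReduce a (dstar - (j + 1)) 1 = _
        simp [sgDown, seqProd]
      rcases Nat.even_or_odd k with he | ho
      · obtain ⟨t, ht⟩ := he
        have hk2 : k % 2 = 0 := by omega
        have ht1 : 1 ≤ t := by omega
        show sgDown a dstar _ (j + 1) k = _
        rw [show sgDown a dstar (fun i => seqProd (sgReduce a dstar) 1 (i - 1)) (j + 1) k =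
            sgDown a dstar (fun i => seqProd (sgReduce a dstar) 1 (i - 1)) j (k / 2) by
          simp [sgDown, hk1, hk2]]
        rw [show k / 2 = t by omega, ih (by omega) t ht1, hlev, sgPair]
        congr 1; omega
      · obtain ⟨t, ht⟩ := ho
        have ht1 : 1 ≤ t := by omega
        have hk2 : k % 2 = 1 := by omega
        rw [show sgDown a dstar (fun i => seqProd (sgReduce a dstar) 1 (i - 1)) (j + 1) k =
            sgDown a dstar (fun i => seqProd (sgReduce a dstar) 1 (i - 1)) j ((k - 1) / 2) *
              sgReduce a (dstar - (j + 1)) k by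
          simp [sgDown, hk1, hk2]]
        rw [show (k - 1) / 2 = t by omega, ih (by omega) t ht1, hlev, sgPair]
        rw [show k - 1 = (2 * (t - 1) + 1) + 1 by omega]
        show _ = seqProd (sgReduce a (dstar - (j + 1))) 1 (2 * (t - 1) + 1) *
          sgReduce a (dstar - (j + 1)) (1 + (2 * (t - 1) + 1) + 1)
        congr 2 <;> omega

/-- Correctness of Sengupta's hybrid parallel scan: take `m ≤ n`, `T = 2^n`,
`d* = n - m`, reduce the 1-indexed input `a` pairwise `d*` times, replace the reduced
array at level `d*` by its exact inclusive all-prefix-sums, and run the down-sweep back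
to level `0`.  The resulting array holds `a 1 * a 2 * ⋯ * a k` at every position
`1 ≤ k ≤ T`. -/
theorem sengupta_correct {M : Type*} [Semigroup M] (n m : ℕ) (hm : m ≤ n) (a : ℕ → M) :
    ∀ k, 1 ≤ k → k ≤ 2 ^ n →
      sgDown a (n - m) (fun i => seqProd (sgReduce a (n - m)) 1 (i - 1)) (n - m) k =
        seqProd a 1 (k - 1) := by
  intro k hk _
  have := sgDown_eq a (n - m) (n - m) le_rfl k hk
  simpa [sgReduce] using this
end
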